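/- arXiv:2506.12562 — 2 statements merged into one kernel-verified Lean document; each statement's English description precedes it below -/
import Mathlib

section
/- The transformation T^∃ satisfies: for every QBF φ, the formula ∃N(φ) ∀P(φ) T^∃(φ) is logically equivalent to φ, where T^∃(φ) is defined like T^∀(φ) except that the big conjunction of defining and linking constraints implies β instead of being conjoined with β. -/
/-- Syntax of full quantified boolean formulas. -/
inductive Fml : Type where
  | var : ℕ → Fml
  | tru : Fml
  | fls : Fml
  | neg : Fml → Fml
  | conj : Fml → Fml → Fml
  | disj : Fml → Fml → Fml
  | imp : Fml → Fml → Fml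
  | biff : Fml → Fml → Fml
  | qex : Finset ℕ → Fml → Fml
  | qall : Finset ℕ → Fml → Fml
  deriving DecidableEq

namespace Fml

/-- Satisfaction of a formula by a valuation. -/
def Sat : (ℕ → Bool) → Fml → Prop
  | V, var p => V p = true
  | _, tru => True
  | _, fls => False
  | V, neg φ => ¬ Sat V φ
  | V, conj φ ψ => Sat V φ ∧ Sat V ψ
  | V, disj φ ψ => Sat V φ ∨ Sat V ψ
  | V, imp φ ψ => Sat V φ → Sat V ψ
  | V, biff φ ψ => (Sat V φ ↔ Sat V ψ)
  | V, qex X φ => ∃ W : ℕ → Bool, (∀ q ∉ X, W q = V q) ∧ Sat W φ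
  | V, qall X φ => ∀ W : ℕ → Bool, (∀ q ∉ X, W q = V q) → Sat W φ

/-- Logical equivalence: same truth value under every valuation. -/
def Equiv (φ ψ : Fml) : Prop := ∀ V : ℕ → Bool, Sat V φ ↔ Sat V ψ

/-- All variables occurring (free or bound, including quantifier blocks). -/
def vars : Fml → Finset ℕ
  | var p => {p}
  | tru => ∅
  | fls => ∅
  | neg φ => vars φ
  | conj φ ψ => vars φ ∪ vars ψ
  | disj φ ψ => vars φ ∪ vars ψ
  | imp φ ψ => vars φ ∪ vars ψ
  | biff φ ψ => vars φ ∪ vars ψ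
  | qex X φ => X ∪ vars φ
  | qall X φ => X ∪ vars φ

/-- Free variables. -/
def freeVars : Fml → Finset ℕ
  | var p => {p}
  | tru => ∅
  | fls => ∅
  | neg φ => freeVars φ
  | conj φ ψ => freeVars φ ∪ freeVars ψ
  | disj φ ψ => freeVars φ ∪ freeVars ψ
  | imp φ ψ => freeVars φ ∪ freeVars ψ
  | biff φ ψ => freeVars φ ∪ freeVars ψ
  | qex X φ => freeVars φ \ X
  | qall X φ => freeVars φ \ X

/-- Bound variables. -/
def boundVars : Fml → Finset ℕ
  | var _ => ∅
  | tru => ∅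
  | fls => ∅
  | neg φ => boundVars φ
  | conj φ ψ => boundVars φ ∪ boundVars ψ
  | disj φ ψ => boundVars φ ∪ boundVars ψ
  | imp φ ψ => boundVars φ ∪ boundVars ψ
  | biff φ ψ => boundVars φ ∪ boundVars ψ
  | qex X φ => X ∪ boundVars φ
  | qall X φ => X ∪ boundVars φ

/-- Substitution of `ρ` for free occurrences of the variable `p`. -/
def subst (p : ℕ) (ρ : Fml) : Fml → Fml
  | var q => if q = p then ρ else var q
  | tru => tru
  | fls => fls
  | neg φ => neg (subst p ρ φ)
  | conj φ ψ => conj (subst p ρ φ) (subst p ρ ψ)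
  | disj φ ψ => disj (subst p ρ φ) (subst p ρ ψ)
  | imp φ ψ => imp (subst p ρ φ) (subst p ρ ψ)
  | biff φ ψ => biff (subst p ρ φ) (subst p ρ ψ)
  | qex X φ => qex X (if p ∈ X then φ else subst p ρ φ)
  | qall X φ => qall X (if p ∈ X then φ else subst p ρ φ)

/-- Simultaneous substitution given by an association list. -/
def simSubst (σ : List (ℕ × Fml)) : Fml → Fml
  | var q => ((σ.find? (fun e => e.1 == q)).map Prod.snd).getD (var q)
  | tru => tru
  | fls => fls
  | neg φ => neg (simSubst σ φ)
  | conj φ ψ => conj (simSubst σ φ) (simSubst σ ψ)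
  | disj φ ψ => disj (simSubst σ φ) (simSubst σ ψ)
  | imp φ ψ => imp (simSubst σ φ) (simSubst σ ψ)
  | biff φ ψ => biff (simSubst σ φ) (simSubst σ ψ)
  | qex X φ => qex X (simSubst (σ.filter (fun e => decide (e.1 ∉ X))) φ)
  | qall X φ => qall X (simSubst (σ.filter (fun e => decide (e.1 ∉ X))) φ)

/-- Conjunction of a list of formulas (`⊤` for the empty list). -/
def bigAnd : List Fml → Fml
  | [] => tru
  | [φ] => φ
  | φ :: rest => conj φ (bigAnd rest)

/-- Length of a formula: variables and operators count 1, except that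
negation does not count; a block `QX` contributes `1 + |X|`. -/
def len : Fml → ℕ
  | var _ => 1
  | tru => 1
  | fls => 1
  | neg φ => len φ
  | conj φ ψ => 1 + len φ + len ψ
  | disj φ ψ => 1 + len φ + len ψ
  | imp φ ψ => 1 + len φ + len ψ
  | biff φ ψ => 1 + len φ + len ψ
  | qex X φ => 1 + X.card + len φ
  | qall X φ => 1 + X.card + len φ

/-- Quantifier depth. -/
def md : Fml → ℕ
  | var _ => 0
  | tru => 0
  | fls => 0
  | neg φ => md φ
  | conj φ ψ => max (md φ) (md ψ)
  | disj φ ψ => max (md φ) (md ψ)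
  | imp φ ψ => max (md φ) (md ψ)
  | biff φ ψ => max (md φ) (md ψ)
  | qex _ φ => 1 + md φ
  | qall _ φ => 1 + md φ

/-- Number of quantifier blocks. -/
def nb : Fml → ℕ
  | var _ => 0
  | tru => 0
  | fls => 0
  | neg φ => nb φ
  | conj φ ψ => nb φ + nb ψ
  | disj φ ψ => nb φ + nb ψ
  | imp φ ψ => nb φ + nb ψ
  | biff φ ψ => nb φ + nb ψ
  | qex _ φ => 1 + nb φ
  | qall _ φ => 1 + nb φ

/-- Total number of quantified variables (sum of block sizes). -/
def nv : Fml → ℕ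
  | var _ => 0
  | tru => 0
  | fls => 0
  | neg φ => nv φ
  | conj φ ψ => nv φ + nv ψ
  | disj φ ψ => nv φ + nv ψ
  | imp φ ψ => nv φ + nv ψ
  | biff φ ψ => nv φ + nv ψ
  | qex X φ => X.card + nv φ
  | qall X φ => X.card + nv φ

/-- Boolean (quantifier-free) formulas. -/
def isBool : Fml → Bool
  | var _ => true
  | tru => true
  | fls => true
  | neg φ => isBool φ
  | conj φ ψ => isBool φ && isBool ψ
  | disj φ ψ => isBool φ && isBool ψ
  | imp φ ψ => isBool φ && isBool ψ
  | biff φ ψ => isBool φ && isBool ψ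
  | qex _ _ => false
  | qall _ _ => false

/-- Prenex form: a prefix of quantifier blocks followed by a boolean formula. -/
def IsPrenex : Fml → Prop
  | qex _ φ => IsPrenex φ
  | qall _ φ => IsPrenex φ
  | φ => isBool φ = true

end Fml

/-- Quantifiers. -/
inductive Quant : Type where
  | qex : Quant
  | qall : Quant
  deriving DecidableEq

/-- The dual of a quantifier. -/
def Quant.dual : Quant → Quant
  | .qex => .qall
  | .qall => .qex

/-- Applying a quantifier block to a formula. -/
def qApply : Quant → Finset ℕ → Fml → Fml
  | .qex, X, φ => Fml.qex X φ
  | .qall, X, φ => Fml.qall X φ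
open Fml in
/-- An entry `(p, Q, X, ψ)` abbreviates the quantified formula `QX ψ`. -/
def entryFml (e : ℕ × Quant × Finset ℕ × Fml) : Fml := qApply e.2.1 e.2.2.1 e.2.2.2

open Fml in
/-- A decomposition of `φ` into a boolean skeleton `β` and its outermost
quantified subformulas `QᵢXᵢφᵢ` abbreviated by fresh variables `pᵢ`,
together with a choice of fresh positive and negative copies `x⁺ᵢ`, `x⁻ᵢ`
of the quantified variables (Fact 4 of the paper). -/
structure OneLevelData (φ : Fml) where
  β : Fml
  L : List (ℕ × Quant × Finset ℕ × Fml)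
  posC : ℕ → ℕ → ℕ
  negC : ℕ → ℕ → ℕ
  hbool : β.isBool = true
  hdec : φ = simSubst (L.map (fun e => (e.1, entryFml e))) β
  hnodup : (L.map (fun e => e.1)).Nodup
  hpnotin : ∀ e ∈ L, e.1 ∉ vars φ
  hpnotfree : ∀ e ∈ L, ∀ e' ∈ L, e.1 ∉ freeVars e'.2.2.2
  hlen : len φ = len β + (L.map (fun e => e.2.2.1.card)).sum
      + (L.map (fun e => len e.2.2.2)).sum
  hmd : md φ = (L.map (fun e => 1 + md e.2.2.2)).foldr max 0
  hcfresh : ∀ i : ℕ, ∀ e ∈ L[i]?, ∀ x ∈ e.2.2.1,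
      posC i x ∉ vars φ ∧ negC i x ∉ vars φ ∧
      posC i x ∉ L.map (fun e => e.1) ∧ negC i x ∉ L.map (fun e => e.1)
  hcdist : ∀ i i' : ℕ, ∀ e ∈ L[i]?, ∀ e' ∈ L[i']?,
      ∀ x ∈ e.2.2.1, ∀ x' ∈ e'.2.2.1, ∀ b b' : Bool,
      (if b then posC i x else negC i x) = (if b' then posC i' x' else negC i' x') →
      (i, x, b) = (i', x', b')

namespace OneLevelData

open Fml

variable {φ : Fml}

/-- `φᵢ[σᵢ]`: the body of the `i`-th entry with its quantified variables
renamed to their positive copies. -/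
noncomputable def renameEntry (D : OneLevelData φ) (i : ℕ) (e : ℕ × Quant × Finset ℕ × Fml) : Fml :=
  simSubst (e.2.2.1.toList.map (fun x => (x, var (D.posC i x)))) e.2.2.2

/-- The linking constraint of the `i`-th entry:
`¬pᵢ → ⋀_{x∈Xᵢ}(x⁺ᵢ ↔ x⁻ᵢ)` if `Qᵢ = ∃` and
`pᵢ → ⋀_{x∈Xᵢ}(x⁺ᵢ ↔ x⁻ᵢ)` if `Qᵢ = ∀`. -/
noncomputable def linkEntry (D : OneLevelData φ) (i : ℕ) (e : ℕ × Quant × Finset ℕ × Fml) : Fml :=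
  match e.2.1 with
  | .qex => imp (neg (var e.1))
      (bigAnd (e.2.2.1.toList.map (fun x => biff (var (D.posC i x)) (var (D.negC i x)))))
  | .qall => imp (var e.1)
      (bigAnd (e.2.2.1.toList.map (fun x => biff (var (D.posC i x)) (var (D.negC i x)))))

/-- The defining and linking constraints
`⋀ᵢ (pᵢ ↔ φᵢ[σᵢ]) ∧ (linking constraints)`. -/
noncomputable def constraints (D : OneLevelData φ) : Fml :=
  conj (bigAnd ((D.L.zipIdx.map Prod.swap).map (fun ie => biff (var ie.2.1) (D.renameEntry ie.1 ie.2))))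
       (bigAnd ((D.L.zipIdx.map Prod.swap).map (fun ie => D.linkEntry ie.1 ie.2)))

/-- The one-level transformation `T^∀(φ)`. -/
noncomputable def Tall (D : OneLevelData φ) : Fml := conj D.constraints D.β

/-- The one-level transformation `T^∃(φ)`. -/
noncomputable def Tex (D : OneLevelData φ) : Fml := imp D.constraints D.β

/-- `T^Q(φ)`. -/
noncomputable def TQ (Q : Quant) (D : OneLevelData φ) : Fml :=
  match Q with
  | .qall => D.Tall
  | .qex => D.Tex

/-- `N(φ)`: the set of fresh negative copies. -/
def Nset (D : OneLevelData φ) : Finset ℕ :=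
  ((D.L.zipIdx.map Prod.swap).map (fun ie => ie.2.2.2.1.image (D.negC ie.1))).foldr (· ∪ ·) ∅

/-- `P(φ)`: the set of fresh positive copies together with the abbreviation
variables `pᵢ`. -/
def Pset (D : OneLevelData φ) : Finset ℕ :=
  ((D.L.zipIdx.map Prod.swap).map (fun ie => ie.2.2.2.1.image (D.posC ie.1) ∪ {ie.2.1})).foldr (· ∪ ·) ∅

end OneLevelData

open Fml OneLevelData in
/-- The full prenexing transformation `tr^Q`, with explicit fuel (the fuel
`md φ` always suffices since `md (T^Q(φ)) = md φ − 1` for non-boolean `φ`);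
`D` is a choice of one-level decomposition for every formula. -/
noncomputable def tr (D : ∀ ψ : Fml, OneLevelData ψ) : ℕ → Quant → Fml → Fml
  | 0, _, φ => φ
  | n + 1, Q, φ =>
    if φ.isBool then φ
    else
      let ψ := TQ Q (D φ)
      qApply Q.dual (Pset (D φ) ∪ Nset (D ψ)) (tr D n Q.dual ψ)

open Fml OneLevelData in
/-- The full prenexing transformation `tr^Q(φ)`. -/
noncomputable def trQ (D : ∀ ψ : Fml, OneLevelData ψ) (Q : Quant) (φ : Fml) : Fml :=
  tr D (md φ) Q φ
section AuxLemmas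
open Classical
namespace Fml

/-- Classical boolean truth value of satisfaction. -/
noncomputable def bSat (V : ℕ → Bool) (ψ : Fml) : Bool :=
  if Sat V ψ then true else false

theorem bSat_iff {V : ℕ → Bool} {ψ : Fml} : bSat V ψ = true ↔ Sat V ψ := by
  unfold bSat; split <;> simp_all

theorem sat_congr : ∀ (ψ : Fml) {V V' : ℕ → Bool},
    (∀ q ∈ freeVars ψ, V q = V' q) → (Sat V ψ ↔ Sat V' ψ)
  | var p, V, V', h => by
      have := h p (by simp [freeVars]); simp only [Sat, this]
  | tru, _, _, _ => Iff.rfl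
  | fls, _, _, _ => Iff.rfl
  | neg ψ, V, V', h => by
      simp only [Sat]
      exact not_congr (sat_congr ψ h)
  | conj ψ χ, V, V', h => by
      simp only [Sat]
      exact and_congr (sat_congr ψ fun q hq => h q (by simp [freeVars, hq]))
        (sat_congr χ fun q hq => h q (by simp [freeVars, hq]))
  | disj ψ χ, V, V', h => by
      simp only [Sat]
      exact or_congr (sat_congr ψ fun q hq => h q (by simp [freeVars, hq]))
        (sat_congr χ fun q hq => h q (by simp [freeVars, hq]))
  | imp ψ χ, V, V', h => by
      simp only [Sat]
      exact imp_congr (sat_congr ψ fun q hq => h q (by simp [freeVars, hq]))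
        (sat_congr χ fun q hq => h q (by simp [freeVars, hq]))
  | biff ψ χ, V, V', h => by
      simp only [Sat]
      exact iff_congr (sat_congr ψ fun q hq => h q (by simp [freeVars, hq]))
        (sat_congr χ fun q hq => h q (by simp [freeVars, hq]))
  | qex X ψ, V, V', h => by
      simp only [Sat]
      constructor
      · rintro ⟨W, hW, hs⟩
        refine ⟨fun q => if q ∈ X then W q else V' q, fun q hq => by simp [hq], ?_⟩
        refine (sat_congr ψ ?_).mp hs
        intro q hq
        by_cases hx : q ∈ X
        · simp [hx]
        · simp only [if_neg hx]
          rw [hW q hx]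
          exact h q (by simp [freeVars, hq, hx])
      · rintro ⟨W, hW, hs⟩
        refine ⟨fun q => if q ∈ X then W q else V q, fun q hq => by simp [hq], ?_⟩
        refine (sat_congr ψ ?_).mpr hs
        intro q hq
        by_cases hx : q ∈ X
        · simp [hx]
        · simp only [if_neg hx]
          rw [hW q hx]
          exact h q (by simp [freeVars, hq, hx])
  | qall X ψ, V, V', h => by
      simp only [Sat]
      constructor
      · intro hs W hW
        have := hs (fun q => if q ∈ X then W q else V q) (fun q hq => by simp [hq])
        refine (sat_congr ψ ?_).mp this
        intro q hq
        by_cases hx : q ∈ X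
        · simp [hx]
        · simp only [if_neg hx]
          rw [hW q hx]
          exact h q (by simp [freeVars, hq, hx])
      · intro hs W hW
        have := hs (fun q => if q ∈ X then W q else V' q) (fun q hq => by simp [hq])
        refine (sat_congr ψ ?_).mpr this
        intro q hq
        by_cases hx : q ∈ X
        · simp [hx]
        · simp only [if_neg hx]
          rw [hW q hx]
          exact h q (by simp [freeVars, hq, hx])

theorem freeVars_subset_vars : ∀ ψ : Fml, freeVars ψ ⊆ vars ψ := by
  intro ψ
  induction ψ with
  | var p => simp [freeVars, vars]
  | tru => simp [freeVars, vars]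
  | fls => simp [freeVars, vars]
  | neg ψ ih => simpa [freeVars, vars] using ih
  | conj ψ χ ih1 ih2 => simp only [freeVars, vars]; exact Finset.union_subset_union ih1 ih2
  | disj ψ χ ih1 ih2 => simp only [freeVars, vars]; exact Finset.union_subset_union ih1 ih2
  | imp ψ χ ih1 ih2 => simp only [freeVars, vars]; exact Finset.union_subset_union ih1 ih2
  | biff ψ χ ih1 ih2 => simp only [freeVars, vars]; exact Finset.union_subset_union ih1 ih2
  | qex X ψ ih =>
      simp only [freeVars, vars]
      intro q hq
      simp only [Finset.mem_sdiff] at hq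
      exact Finset.mem_union_right _ (ih hq.1)
  | qall X ψ ih =>
      simp only [freeVars, vars]
      intro q hq
      simp only [Finset.mem_sdiff] at hq
      exact Finset.mem_union_right _ (ih hq.1)

theorem sat_bigAnd {V : ℕ → Bool} : ∀ {l : List Fml}, Sat V (bigAnd l) ↔ ∀ ψ ∈ l, Sat V ψ
  | [] => by simp [bigAnd, Sat]
  | [ψ] => by simp [bigAnd]
  | ψ :: χ :: rest => by
      have h : bigAnd (ψ :: χ :: rest) = conj ψ (bigAnd (χ :: rest)) := rfl
      rw [h]
      simp only [Sat, sat_bigAnd (l := χ :: rest)]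
      simp only [List.mem_cons]
      constructor
      · rintro ⟨h1, h2⟩ ρ (rfl | hρ)
        · exact h1
        · exact h2 ρ hρ
      · intro hh
        exact ⟨hh ψ (Or.inl rfl), fun ρ hρ => hh ρ (Or.inr hρ)⟩

end Fml
end AuxLemmas
section AuxLemmas2
open Classical
namespace Fml

/-- Evaluating a simultaneous substitution into a boolean formula. -/
theorem sat_simSubst_bool {V : ℕ → Bool} : ∀ {β : Fml}, β.isBool = true → ∀ {σ : List (ℕ × Fml)},
    (Sat V (simSubst σ β) ↔
      Sat (fun q => ((σ.find? (fun e => e.1 == q)).map (fun e => bSat V e.2)).getD (V q)) β)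
  | var p, _, σ => by
      rcases h : σ.find? (fun e => e.1 == p) with _ | z
      · simp [simSubst, Sat, h]
      · simp [simSubst, Sat, h, bSat_iff]
  | tru, _, σ => Iff.rfl
  | fls, _, σ => Iff.rfl
  | neg β, hb, σ => by
      simp only [simSubst, Sat]
      exact not_congr (sat_simSubst_bool (by simpa [isBool] using hb))
  | conj β γ, hb, σ => by
      simp only [isBool, Bool.and_eq_true] at hb
      simp only [simSubst, Sat]
      exact and_congr (sat_simSubst_bool hb.1) (sat_simSubst_bool hb.2)
  | disj β γ, hb, σ => by
      simp only [isBool, Bool.and_eq_true] at hb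
      simp only [simSubst, Sat]
      exact or_congr (sat_simSubst_bool hb.1) (sat_simSubst_bool hb.2)
  | imp β γ, hb, σ => by
      simp only [isBool, Bool.and_eq_true] at hb
      simp only [simSubst, Sat]
      exact imp_congr (sat_simSubst_bool hb.1) (sat_simSubst_bool hb.2)
  | biff β γ, hb, σ => by
      simp only [isBool, Bool.and_eq_true] at hb
      simp only [simSubst, Sat]
      exact iff_congr (sat_simSubst_bool hb.1) (sat_simSubst_bool hb.2)
  | qex X β, hb, σ => by simp [isBool] at hb
  | qall X β, hb, σ => by simp [isBool] at hb

theorem mem_vars_simSubst_of_none : ∀ {β : Fml}, β.isBool = true → ∀ {σ : List (ℕ × Fml)} {q : ℕ},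
    q ∈ vars β → σ.find? (fun e => e.1 == q) = none → q ∈ vars (simSubst σ β)
  | var p, _, σ, q, hq, h => by
      simp only [vars, Finset.mem_singleton] at hq
      subst hq
      simp [simSubst, h, vars]
  | tru, _, σ, q, hq, h => by simp [vars] at hq
  | fls, _, σ, q, hq, h => by simp [vars] at hq
  | neg β, hb, σ, q, hq, h => by
      have hq' : q ∈ vars β := hq
      have := mem_vars_simSubst_of_none (β := β) (by simpa [isBool] using hb) hq' h
      simpa [simSubst, vars] using this
  | conj β γ, hb, σ, q, hq, h => by
      simp only [isBool, Bool.and_eq_true] at hb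
      simp only [vars, simSubst, Finset.mem_union] at hq ⊢
      exact hq.imp (fun hq => mem_vars_simSubst_of_none hb.1 hq h)
        (fun hq => mem_vars_simSubst_of_none hb.2 hq h)
  | disj β γ, hb, σ, q, hq, h => by
      simp only [isBool, Bool.and_eq_true] at hb
      simp only [vars, simSubst, Finset.mem_union] at hq ⊢
      exact hq.imp (fun hq => mem_vars_simSubst_of_none hb.1 hq h)
        (fun hq => mem_vars_simSubst_of_none hb.2 hq h)
  | imp β γ, hb, σ, q, hq, h => by
      simp only [isBool, Bool.and_eq_true] at hb
      simp only [vars, simSubst, Finset.mem_union] at hq ⊢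
      exact hq.imp (fun hq => mem_vars_simSubst_of_none hb.1 hq h)
        (fun hq => mem_vars_simSubst_of_none hb.2 hq h)
  | biff β γ, hb, σ, q, hq, h => by
      simp only [isBool, Bool.and_eq_true] at hb
      simp only [vars, simSubst, Finset.mem_union] at hq ⊢
      exact hq.imp (fun hq => mem_vars_simSubst_of_none hb.1 hq h)
        (fun hq => mem_vars_simSubst_of_none hb.2 hq h)
  | qex X β, hb, σ, q, hq, h => by simp [isBool] at hb
  | qall X β, hb, σ, q, hq, h => by simp [isBool] at hb

theorem vars_subset_simSubst_of_some : ∀ {β : Fml}, β.isBool = true →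
    ∀ {σ : List (ℕ × Fml)} {q : ℕ} {z : ℕ × Fml},
    q ∈ vars β → σ.find? (fun e => e.1 == q) = some z → vars z.2 ⊆ vars (simSubst σ β)
  | var p, _, σ, q, z, hq, h => by
      simp only [vars, Finset.mem_singleton] at hq
      subst hq
      simp [simSubst, h, vars]
  | tru, _, σ, q, z, hq, h => by simp [vars] at hq
  | fls, _, σ, q, z, hq, h => by simp [vars] at hq
  | neg β, hb, σ, q, z, hq, h => by
      have hq' : q ∈ vars β := hq
      have := vars_subset_simSubst_of_some (β := β) (by simpa [isBool] using hb) hq' h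
      intro y hy
      exact this hy
  | conj β γ, hb, σ, q, z, hq, h => by
      simp only [isBool, Bool.and_eq_true] at hb
      simp only [vars, Finset.mem_union] at hq
      rcases hq with hq | hq
      · exact (vars_subset_simSubst_of_some hb.1 hq h).trans
          (by simp only [simSubst, vars]; exact Finset.subset_union_left)
      · exact (vars_subset_simSubst_of_some hb.2 hq h).trans
          (by simp only [simSubst, vars]; exact Finset.subset_union_right)
  | disj β γ, hb, σ, q, z, hq, h => by
      simp only [isBool, Bool.and_eq_true] at hb
      simp only [vars, Finset.mem_union] at hq
      rcases hq with hq | hq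
      · exact (vars_subset_simSubst_of_some hb.1 hq h).trans
          (by simp only [simSubst, vars]; exact Finset.subset_union_left)
      · exact (vars_subset_simSubst_of_some hb.2 hq h).trans
          (by simp only [simSubst, vars]; exact Finset.subset_union_right)
  | imp β γ, hb, σ, q, z, hq, h => by
      simp only [isBool, Bool.and_eq_true] at hb
      simp only [vars, Finset.mem_union] at hq
      rcases hq with hq | hq
      · exact (vars_subset_simSubst_of_some hb.1 hq h).trans
          (by simp only [simSubst, vars]; exact Finset.subset_union_left)
      · exact (vars_subset_simSubst_of_some hb.2 hq h).trans
          (by simp only [simSubst, vars]; exact Finset.subset_union_right)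
  | biff β γ, hb, σ, q, z, hq, h => by
      simp only [isBool, Bool.and_eq_true] at hb
      simp only [vars, Finset.mem_union] at hq
      rcases hq with hq | hq
      · exact (vars_subset_simSubst_of_some hb.1 hq h).trans
          (by simp only [simSubst, vars]; exact Finset.subset_union_left)
      · exact (vars_subset_simSubst_of_some hb.2 hq h).trans
          (by simp only [simSubst, vars]; exact Finset.subset_union_right)
  | qex X β, hb, σ, q, z, hq, h => by simp [isBool] at hb
  | qall X β, hb, σ, q, z, hq, h => by simp [isBool] at hb

/-- Free variables of a simultaneous substitution. -/
theorem mem_freeVars_simSubst : ∀ {ψ : Fml} {σ : List (ℕ × Fml)} {q : ℕ},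
    q ∈ freeVars (simSubst σ ψ) → q ∈ freeVars ψ ∨ ∃ e ∈ σ, q ∈ freeVars e.2
  | var p, σ, q, h => by
      rcases hf : σ.find? (fun e => e.1 == p) with _ | z
      · simp only [simSubst, hf, Option.map_none, Option.getD_none] at h
        exact Or.inl h
      · simp only [simSubst, hf, Option.map_some, Option.getD_some] at h
        exact Or.inr ⟨z, List.mem_of_find?_eq_some hf, h⟩
  | tru, σ, q, h => by simp [simSubst, freeVars] at h
  | fls, σ, q, h => by simp [simSubst, freeVars] at h
  | neg ψ, σ, q, h => mem_freeVars_simSubst (ψ := ψ) h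
  | conj ψ χ, σ, q, h => by
      simp only [simSubst, freeVars, Finset.mem_union] at h ⊢
      rcases h with h | h
      · rcases mem_freeVars_simSubst (ψ := ψ) h with h | h
        · exact Or.inl (Or.inl h)
        · exact Or.inr h
      · rcases mem_freeVars_simSubst (ψ := χ) h with h | h
        · exact Or.inl (Or.inr h)
        · exact Or.inr h
  | disj ψ χ, σ, q, h => by
      simp only [simSubst, freeVars, Finset.mem_union] at h ⊢
      rcases h with h | h
      · rcases mem_freeVars_simSubst (ψ := ψ) h with h | h
        · exact Or.inl (Or.inl h)
        · exact Or.inr h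
      · rcases mem_freeVars_simSubst (ψ := χ) h with h | h
        · exact Or.inl (Or.inr h)
        · exact Or.inr h
  | imp ψ χ, σ, q, h => by
      simp only [simSubst, freeVars, Finset.mem_union] at h ⊢
      rcases h with h | h
      · rcases mem_freeVars_simSubst (ψ := ψ) h with h | h
        · exact Or.inl (Or.inl h)
        · exact Or.inr h
      · rcases mem_freeVars_simSubst (ψ := χ) h with h | h
        · exact Or.inl (Or.inr h)
        · exact Or.inr h
  | biff ψ χ, σ, q, h => by
      simp only [simSubst, freeVars, Finset.mem_union] at h ⊢
      rcases h with h | h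
      · rcases mem_freeVars_simSubst (ψ := ψ) h with h | h
        · exact Or.inl (Or.inl h)
        · exact Or.inr h
      · rcases mem_freeVars_simSubst (ψ := χ) h with h | h
        · exact Or.inl (Or.inr h)
        · exact Or.inr h
  | qex X ψ, σ, q, h => by
      simp only [simSubst, freeVars, Finset.mem_sdiff] at h ⊢
      rcases mem_freeVars_simSubst (ψ := ψ) h.1 with h' | ⟨e, he, hq⟩
      · exact Or.inl ⟨h', h.2⟩
      · exact Or.inr ⟨e, List.mem_of_mem_filter he, hq⟩
  | qall X ψ, σ, q, h => by
      simp only [simSubst, freeVars, Finset.mem_sdiff] at h ⊢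
      rcases mem_freeVars_simSubst (ψ := ψ) h.1 with h' | ⟨e, he, hq⟩
      · exact Or.inl ⟨h', h.2⟩
      · exact Or.inr ⟨e, List.mem_of_mem_filter he, hq⟩

end Fml
end AuxLemmas2
section AuxLemmas3
open Classical
namespace Fml

theorem sat_simSubst_rename : ∀ (ψ : Fml) (l : List ℕ) (r : ℕ → ℕ) (V : ℕ → Bool),
    (∀ x ∈ l, r x ∉ vars ψ) →
    (∀ x ∈ l, ∀ y ∈ l, r x = r y → x = y) →
    (Sat V (simSubst (l.map (fun x => (x, var (r x)))) ψ) ↔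
      Sat (fun q => if q ∈ l then V (r q) else V q) ψ)
  | var p, l, r, V, hfresh, hinj => by
      rcases hf : (l.map (fun x => (x, var (r x)))).find? (fun e => e.1 == p) with _ | z
      · have hnl : p ∉ l := by
          intro hp
          have := List.find?_eq_none.mp hf (p, var (r p)) (List.mem_map_of_mem hp)
          simp at this
        simp [simSubst, hf, Sat, hnl]
      · have hz := List.mem_of_find?_eq_some hf
        have hpz := List.find?_some hf
        obtain ⟨x, hx, rfl⟩ := List.mem_map.mp hz
        have : x = p := by simpa using hpz
        subst this
        simp [simSubst, hf, Sat, hx]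
  | tru, l, r, V, hfresh, hinj => Iff.rfl
  | fls, l, r, V, hfresh, hinj => Iff.rfl
  | neg ψ, l, r, V, hfresh, hinj => by
      simp only [simSubst, Sat]
      exact not_congr (sat_simSubst_rename ψ l r V hfresh hinj)
  | conj ψ χ, l, r, V, hfresh, hinj => by
      simp only [simSubst, Sat]
      exact and_congr
        (sat_simSubst_rename ψ l r V (fun x hx => by
          have := hfresh x hx; simp only [vars, Finset.mem_union, not_or] at this; exact this.1) hinj)
        (sat_simSubst_rename χ l r V (fun x hx => by
          have := hfresh x hx; simp only [vars, Finset.mem_union, not_or] at this; exact this.2) hinj)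
  | disj ψ χ, l, r, V, hfresh, hinj => by
      simp only [simSubst, Sat]
      exact or_congr
        (sat_simSubst_rename ψ l r V (fun x hx => by
          have := hfresh x hx; simp only [vars, Finset.mem_union, not_or] at this; exact this.1) hinj)
        (sat_simSubst_rename χ l r V (fun x hx => by
          have := hfresh x hx; simp only [vars, Finset.mem_union, not_or] at this; exact this.2) hinj)
  | imp ψ χ, l, r, V, hfresh, hinj => by
      simp only [simSubst, Sat]
      exact imp_congr
        (sat_simSubst_rename ψ l r V (fun x hx => by
          have := hfresh x hx; simp only [vars, Finset.mem_union, not_or] at this; exact this.1) hinj)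
        (sat_simSubst_rename χ l r V (fun x hx => by
          have := hfresh x hx; simp only [vars, Finset.mem_union, not_or] at this; exact this.2) hinj)
  | biff ψ χ, l, r, V, hfresh, hinj => by
      simp only [simSubst, Sat]
      exact iff_congr
        (sat_simSubst_rename ψ l r V (fun x hx => by
          have := hfresh x hx; simp only [vars, Finset.mem_union, not_or] at this; exact this.1) hinj)
        (sat_simSubst_rename χ l r V (fun x hx => by
          have := hfresh x hx; simp only [vars, Finset.mem_union, not_or] at this; exact this.2) hinj)
  | qex X ψ, l, r, V, hfresh, hinj => by
      simp only [simSubst, Sat]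
      have hfm : ((l.map (fun x => (x, var (r x)))).filter (fun e => decide (e.1 ∉ X)))
          = ((l.filter (fun x => decide (x ∉ X))).map (fun x => (x, var (r x)))) := by
        rw [List.filter_map]; rfl
      rw [hfm]
      have hl'sub : ∀ x ∈ l.filter (fun x => decide (x ∉ X)), x ∈ l :=
        fun x hx => List.mem_of_mem_filter hx
      have hl'X : ∀ x ∈ l.filter (fun x => decide (x ∉ X)), x ∉ X := by
        intro x hx
        have := List.of_mem_filter hx
        simpa using this
      have hmem' : ∀ x, x ∈ l → x ∉ X → x ∈ l.filter (fun x => decide (x ∉ X)) := by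
        intro x h1 h2; exact List.mem_filter.mpr ⟨h1, by simpa⟩
      have hfresh' : ∀ x ∈ l.filter (fun x => decide (x ∉ X)), r x ∉ vars ψ := by
        intro x hx
        have := hfresh x (hl'sub x hx)
        simp only [vars, Finset.mem_union, not_or] at this
        exact this.2
      have hrX : ∀ x ∈ l.filter (fun x => decide (x ∉ X)), r x ∉ X := by
        intro x hx
        have := hfresh x (hl'sub x hx)
        simp only [vars, Finset.mem_union, not_or] at this
        exact this.1
      have hinj' : ∀ x ∈ l.filter (fun x => decide (x ∉ X)),
          ∀ y ∈ l.filter (fun x => decide (x ∉ X)), r x = r y → x = y :=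
        fun x hx y hy => hinj x (hl'sub x hx) y (hl'sub y hy)
      constructor
      · rintro ⟨W, hW, hs⟩
        refine ⟨fun q => if q ∈ l.filter (fun x => decide (x ∉ X)) then W (r q) else W q, ?_, ?_⟩
        · intro q hq
          by_cases hql : q ∈ l.filter (fun x => decide (x ∉ X))
          · simp only [if_pos hql]
            rw [hW (r q) (hrX q hql)]
            simp [hl'sub q hql]
          · simp only [if_neg hql]
            rw [hW q hq]
            have : q ∉ l := fun hql2 => hql (hmem' q hql2 hq)
            simp [this]
        · exact (sat_simSubst_rename ψ _ r W hfresh' hinj').mp hs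
      · rintro ⟨W', hW', hs⟩
        refine ⟨fun y =>
          if h : ∃ x, x ∈ l.filter (fun x => decide (x ∉ X)) ∧ r x = y then W' h.choose
          else if y ∈ l.filter (fun x => decide (x ∉ X)) then V y else W' y, ?_, ?_⟩
        · intro q hq
          by_cases h : ∃ x, x ∈ l.filter (fun x => decide (x ∉ X)) ∧ r x = q
          · obtain hcs := h.choose_spec
            simp only [dif_pos h]
            rw [hW' h.choose (hl'X _ hcs.1)]
            simp only [if_pos (hl'sub _ hcs.1), hcs.2]
          · simp only [dif_neg h]
            by_cases hql : q ∈ l.filter (fun x => decide (x ∉ X))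
            · rw [if_pos hql]
            · simp only [if_neg hql]
              rw [hW' q hq]
              have : q ∉ l := fun hql2 => hql (hmem' q hql2 hq)
              simp [this]
        · refine (sat_simSubst_rename ψ _ r _ hfresh' hinj').mpr ?_
          refine (sat_congr ψ ?_).mpr hs
          intro q hq
          by_cases hql : q ∈ l.filter (fun x => decide (x ∉ X))
          · simp only [if_pos hql]
            have hex : ∃ x, x ∈ l.filter (fun x => decide (x ∉ X)) ∧ r x = r q := ⟨q, hql, rfl⟩
            have hcs := hex.choose_spec
            have heq : hex.choose = q := hinj' _ hcs.1 _ hql hcs.2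
            simp only [dif_pos hex, heq]
          · simp only [if_neg hql]
            by_cases h : ∃ x, x ∈ l.filter (fun x => decide (x ∉ X)) ∧ r x = q
            · exfalso
              obtain hcs := h.choose_spec
              have hnq := hfresh' _ hcs.1
              rw [hcs.2] at hnq
              exact hnq (freeVars_subset_vars ψ hq)
            · simp only [dif_neg h, if_neg hql]
  | qall X ψ, l, r, V, hfresh, hinj => by
      simp only [simSubst, Sat]
      have hfm : ((l.map (fun x => (x, var (r x)))).filter (fun e => decide (e.1 ∉ X)))
          = ((l.filter (fun x => decide (x ∉ X))).map (fun x => (x, var (r x)))) := by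
        rw [List.filter_map]; rfl
      rw [hfm]
      have hl'sub : ∀ x ∈ l.filter (fun x => decide (x ∉ X)), x ∈ l :=
        fun x hx => List.mem_of_mem_filter hx
      have hl'X : ∀ x ∈ l.filter (fun x => decide (x ∉ X)), x ∉ X := by
        intro x hx
        have := List.of_mem_filter hx
        simpa using this
      have hmem' : ∀ x, x ∈ l → x ∉ X → x ∈ l.filter (fun x => decide (x ∉ X)) := by
        intro x h1 h2; exact List.mem_filter.mpr ⟨h1, by simpa⟩
      have hfresh' : ∀ x ∈ l.filter (fun x => decide (x ∉ X)), r x ∉ vars ψ := by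
        intro x hx
        have := hfresh x (hl'sub x hx)
        simp only [vars, Finset.mem_union, not_or] at this
        exact this.2
      have hrX : ∀ x ∈ l.filter (fun x => decide (x ∉ X)), r x ∉ X := by
        intro x hx
        have := hfresh x (hl'sub x hx)
        simp only [vars, Finset.mem_union, not_or] at this
        exact this.1
      have hinj' : ∀ x ∈ l.filter (fun x => decide (x ∉ X)),
          ∀ y ∈ l.filter (fun x => decide (x ∉ X)), r x = r y → x = y :=
        fun x hx y hy => hinj x (hl'sub x hx) y (hl'sub y hy)
      constructor
      · intro hs W' hW'
        -- construct W from W' as in the existential backward case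
        have key : Sat (fun q => if q ∈ l.filter (fun x => decide (x ∉ X))
            then (fun y => if h : ∃ x, x ∈ l.filter (fun x => decide (x ∉ X)) ∧ r x = y then W' h.choose
              else if y ∈ l.filter (fun x => decide (x ∉ X)) then V y else W' y) (r q)
            else (fun y => if h : ∃ x, x ∈ l.filter (fun x => decide (x ∉ X)) ∧ r x = y then W' h.choose
              else if y ∈ l.filter (fun x => decide (x ∉ X)) then V y else W' y) q) ψ := by
          refine (sat_simSubst_rename ψ _ r _ hfresh' hinj').mp (hs _ ?_)
          intro q hq
          by_cases h : ∃ x, x ∈ l.filter (fun x => decide (x ∉ X)) ∧ r x = q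
          · obtain hcs := h.choose_spec
            simp only [dif_pos h]
            rw [hW' h.choose (hl'X _ hcs.1)]
            simp only [if_pos (hl'sub _ hcs.1), hcs.2]
          · simp only [dif_neg h]
            by_cases hql : q ∈ l.filter (fun x => decide (x ∉ X))
            · rw [if_pos hql]
            · simp only [if_neg hql]
              rw [hW' q hq]
              have : q ∉ l := fun hql2 => hql (hmem' q hql2 hq)
              simp [this]
        refine (sat_congr ψ ?_).mp key
        intro q hq
        by_cases hql : q ∈ l.filter (fun x => decide (x ∉ X))
        · simp only [if_pos hql]
          have hex : ∃ x, x ∈ l.filter (fun x => decide (x ∉ X)) ∧ r x = r q := ⟨q, hql, rfl⟩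
          have hcs := hex.choose_spec
          have heq : hex.choose = q := hinj' _ hcs.1 _ hql hcs.2
          simp only [dif_pos hex, heq]
        · simp only [if_neg hql]
          by_cases h : ∃ x, x ∈ l.filter (fun x => decide (x ∉ X)) ∧ r x = q
          · exfalso
            obtain hcs := h.choose_spec
            have hnq := hfresh' _ hcs.1
            rw [hcs.2] at hnq
            exact hnq (freeVars_subset_vars ψ hq)
          · simp only [dif_neg h, if_neg hql]
      · intro hs W hW
        refine (sat_simSubst_rename ψ _ r W hfresh' hinj').mpr ?_
        refine hs _ ?_
        intro q hq
        by_cases hql : q ∈ l.filter (fun x => decide (x ∉ X))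
        · simp only [if_pos hql]
          rw [hW (r q) (hrX q hql)]
          simp [hl'sub q hql]
        · simp only [if_neg hql]
          rw [hW q hq]
          have : q ∉ l := fun hql2 => hql (hmem' q hql2 hq)
          simp [this]

end Fml
end AuxLemmas3
section AuxLemmas4
open Classical Fml

theorem mem_foldr_union {α : Type} {g : α → Finset ℕ} {q : ℕ} :
    ∀ {l : List α}, q ∈ (l.map g).foldr (· ∪ ·) ∅ ↔ ∃ z ∈ l, q ∈ g z
  | [] => by simp
  | a :: l => by
      simp only [List.map_cons, List.foldr_cons, Finset.mem_union, List.mem_cons]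
      rw [mem_foldr_union (l := l)]
      constructor
      · rintro (h | ⟨z, hz, hq⟩)
        · exact ⟨a, Or.inl rfl, h⟩
        · exact ⟨z, Or.inr hz, hq⟩
      · rintro ⟨z, (rfl | hz), hq⟩
        · exact Or.inl hq
        · exact Or.inr ⟨z, hz, hq⟩

theorem mem_zipIdx_swap {α : Type} {l : List α} {i : ℕ} {e : α} :
    (i, e) ∈ l.zipIdx.map Prod.swap ↔ l[i]? = some e := by
  rw [List.mem_map]
  constructor
  · rintro ⟨⟨a, b⟩, h, he⟩
    simp only [Prod.swap, Prod.mk.injEq] at he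
    obtain ⟨rfl, rfl⟩ := he
    exact List.mem_zipIdx_iff_getElem?.mp h
  · intro h
    exact ⟨(e, i), List.mem_zipIdx_iff_getElem?.mpr h, rfl⟩

namespace OneLevelData

variable {φ : Fml} (D : OneLevelData φ)

theorem mem_Nset {q : ℕ} :
    q ∈ D.Nset ↔ ∃ i e, D.L[i]? = some e ∧ ∃ x ∈ e.2.2.1, D.negC i x = q := by
  unfold Nset
  rw [mem_foldr_union]
  constructor
  · rintro ⟨⟨i, e⟩, hie, hq⟩
    rw [mem_zipIdx_swap] at hie
    simp only [Finset.mem_image] at hq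
    obtain ⟨x, hx, hxq⟩ := hq
    exact ⟨i, e, hie, x, hx, hxq⟩
  · rintro ⟨i, e, hie, x, hx, hxq⟩
    exact ⟨(i, e), mem_zipIdx_swap.mpr hie, Finset.mem_image.mpr ⟨x, hx, hxq⟩⟩

theorem mem_Pset {q : ℕ} :
    q ∈ D.Pset ↔ ∃ i e, D.L[i]? = some e ∧
      ((∃ x ∈ e.2.2.1, D.posC i x = q) ∨ q = e.1) := by
  unfold Pset
  rw [mem_foldr_union]
  constructor
  · rintro ⟨⟨i, e⟩, hie, hq⟩
    rw [mem_zipIdx_swap] at hie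
    simp only [Finset.mem_union, Finset.mem_image, Finset.mem_singleton] at hq
    exact ⟨i, e, hie, hq⟩
  · rintro ⟨i, e, hie, hq⟩
    refine ⟨(i, e), mem_zipIdx_swap.mpr hie, ?_⟩
    simpa only [Finset.mem_union, Finset.mem_image, Finset.mem_singleton] using hq

/-- key uniqueness: `find?` on the key of a member. -/
theorem find?_key {e : ℕ × Quant × Finset ℕ × Fml} (he : e ∈ D.L) :
    D.L.find? (fun e' => e'.1 == e.1) = some e := by
  have hsome : (D.L.find? (fun e' => e'.1 == e.1)).isSome := by
    rw [List.find?_isSome]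
    exact ⟨e, he, by simp⟩
  rcases hf : D.L.find? (fun e' => e'.1 == e.1) with _ | z
  · rw [hf] at hsome; simp at hsome
  · have hz := List.mem_of_find?_eq_some hf
    have hpz : z.1 = e.1 := by simpa using List.find?_some hf
    have := List.inj_on_of_nodup_map D.hnodup hz he hpz
    rw [hf, this]

/-- The canonical valuation for the skeleton. -/
noncomputable def Vstar (V : ℕ → Bool) : ℕ → Bool :=
  fun q => ((D.L.find? (fun e => e.1 == q)).map (fun e => bSat V (entryFml e))).getD (V q)

theorem sat_iff_Vstar (V : ℕ → Bool) : Sat V φ ↔ Sat (D.Vstar V) D.β := by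
  conv_lhs => rw [D.hdec]
  rw [sat_simSubst_bool D.hbool]
  have : (fun q => (((D.L.map (fun e => (e.1, entryFml e))).find? (fun e => e.1 == q)).map
      (fun e => bSat V e.2)).getD (V q)) = D.Vstar V := by
    funext q
    rw [List.find?_map]
    unfold Vstar
    rcases hf : D.L.find? (fun e => e.1 == q) with _ | z
    · have h2 : D.L.find? ((fun (e : ℕ × Fml) => e.1 == q) ∘ fun e => (e.1, entryFml e)) = none := hf
      rw [h2, hf]; rfl
    · have h2 : D.L.find? ((fun (e : ℕ × Fml) => e.1 == q) ∘ fun e => (e.1, entryFml e)) = some z := hf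
      rw [h2, hf]; rfl
  rw [this]

theorem vstar_of_key {V : ℕ → Bool} {e : ℕ × Quant × Finset ℕ × Fml} (he : e ∈ D.L) :
    D.Vstar V e.1 = bSat V (entryFml e) := by
  unfold Vstar
  rw [D.find?_key he]
  rfl

theorem vstar_of_not_key {V : ℕ → Bool} {q : ℕ} (h : q ∉ D.L.map (fun e => e.1)) :
    D.Vstar V q = V q := by
  unfold Vstar
  have : D.L.find? (fun e => e.1 == q) = none := by
    rw [List.find?_eq_none]
    intro z hz
    simp only [beq_iff_eq]
    intro hzq
    exact h (List.mem_map.mpr ⟨z, hz, hzq⟩)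
  rw [this]; rfl

theorem vars_entry_subset {e : ℕ × Quant × Finset ℕ × Fml} (he : e ∈ D.L)
    (hu : e.1 ∈ vars D.β) : vars (entryFml e) ⊆ vars φ := by
  have hf : (D.L.map (fun e => (e.1, entryFml e))).find? (fun z => z.1 == e.1)
      = some (e.1, entryFml e) := by
    rw [List.find?_map]
    have : D.L.find? ((fun (z : ℕ × Fml) => z.1 == e.1) ∘ fun e => (e.1, entryFml e))
        = some e := D.find?_key he
    rw [this]; rfl
  have := vars_subset_simSubst_of_some D.hbool hu hf
  rw [← D.hdec] at this
  exact this

theorem mem_vars_of_not_key {q : ℕ} (hq : q ∈ vars D.β) (h : q ∉ D.L.map (fun e => e.1)) :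
    q ∈ vars φ := by
  have hf : (D.L.map (fun e => (e.1, entryFml e))).find? (fun z => z.1 == q) = none := by
    rw [List.find?_eq_none]
    rintro z hz
    obtain ⟨e, he, rfl⟩ := List.mem_map.mp hz
    simp only [beq_iff_eq]
    intro hzq
    exact h (List.mem_map.mpr ⟨e, he, hzq⟩)
  have := mem_vars_simSubst_of_none D.hbool hq hf
  rw [← D.hdec] at this
  exact this

theorem vars_entry_eq (e : ℕ × Quant × Finset ℕ × Fml) :
    vars (entryFml e) = e.2.2.1 ∪ vars e.2.2.2 := by
  rcases e with ⟨p, Q, X, b⟩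
  cases Q <;> rfl

/-- Evaluation of the renamed body, for entries whose body variables lie in `vars φ`. -/
theorem sat_renameEntry {V : ℕ → Bool} {i : ℕ} {e : ℕ × Quant × Finset ℕ × Fml}
    (he : D.L[i]? = some e) (hsub : vars (entryFml e) ⊆ vars φ) :
    Sat V (D.renameEntry i e) ↔
      Sat (fun q => if q ∈ e.2.2.1.toList then V (D.posC i q) else V q) e.2.2.2 := by
  unfold renameEntry
  apply sat_simSubst_rename
  · intro x hx
    rw [Finset.mem_toList] at hx
    intro hmem
    have h1 : D.posC i x ∉ vars φ := (D.hcfresh i e he x hx).1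
    apply h1
    apply hsub
    rw [vars_entry_eq]
    exact Finset.mem_union_right _ hmem
  · intro x hx y hy hxy
    rw [Finset.mem_toList] at hx hy
    have := D.hcdist i i e he e he x hx y hy true true (by simpa using hxy)
    simpa using this

theorem sat_constraints_iff {U : ℕ → Bool} :
    Sat U D.constraints ↔ ∀ i e, D.L[i]? = some e →
      ((U e.1 = true ↔ Sat U (D.renameEntry i e)) ∧ Sat U (D.linkEntry i e)) := by
  unfold constraints
  constructor
  · rintro ⟨h1, h2⟩ i e he
    rw [sat_bigAnd] at h1 h2
    constructor
    · have := h1 (biff (var e.1) (D.renameEntry i e)) (by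
        apply List.mem_map.mpr
        exact ⟨(i, e), mem_zipIdx_swap.mpr he, rfl⟩)
      exact this
    · exact h2 (D.linkEntry i e) (by
        apply List.mem_map.mpr
        exact ⟨(i, e), mem_zipIdx_swap.mpr he, rfl⟩)
  · intro h
    constructor
    · rw [sat_bigAnd]
      intro ρ hρ
      obtain ⟨⟨i, e⟩, hie, rfl⟩ := List.mem_map.mp hρ
      rw [mem_zipIdx_swap] at hie
      exact (h i e hie).1
    · rw [sat_bigAnd]
      intro ρ hρ
      obtain ⟨⟨i, e⟩, hie, rfl⟩ := List.mem_map.mp hρ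
      rw [mem_zipIdx_swap] at hie
      exact (h i e hie).2

theorem sat_linkEntry_ex {U : ℕ → Bool} {i p : ℕ} {X : Finset ℕ} {b : Fml}
    (h : Sat U (D.linkEntry i (p, Quant.qex, X, b))) (hp : U p = false) :
    ∀ x ∈ X, U (D.posC i x) = U (D.negC i x) := by
  simp only [linkEntry] at h
  have h' := h (by simp only [Sat]; simp [hp])
  rw [sat_bigAnd] at h'
  intro x hx
  have := h' (biff (var (D.posC i x)) (var (D.negC i x)))
    (List.mem_map.mpr ⟨x, Finset.mem_toList.mpr hx, rfl⟩)
  simp only [Sat] at this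
  exact Bool.eq_iff_iff.mpr this

theorem sat_linkEntry_all {U : ℕ → Bool} {i p : ℕ} {X : Finset ℕ} {b : Fml}
    (h : Sat U (D.linkEntry i (p, Quant.qall, X, b))) (hp : U p = true) :
    ∀ x ∈ X, U (D.posC i x) = U (D.negC i x) := by
  simp only [linkEntry] at h
  have h' := h hp
  rw [sat_bigAnd] at h'
  intro x hx
  have := h' (biff (var (D.posC i x)) (var (D.negC i x)))
    (List.mem_map.mpr ⟨x, Finset.mem_toList.mpr hx, rfl⟩)
  simp only [Sat] at this
  exact Bool.eq_iff_iff.mpr this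

theorem sat_linkEntry_of_agree {U : ℕ → Bool} {i p : ℕ} {Q : Quant} {X : Finset ℕ} {b : Fml}
    (h : ∀ x ∈ X, U (D.posC i x) = U (D.negC i x)) :
    Sat U (D.linkEntry i (p, Q, X, b)) := by
  have hb : Sat U (bigAnd (X.toList.map
      (fun x => biff (var (D.posC i x)) (var (D.negC i x))))) := by
    rw [sat_bigAnd]
    intro ρ hρ
    obtain ⟨x, hx, rfl⟩ := List.mem_map.mp hρ
    rw [Finset.mem_toList] at hx
    simp only [Sat]
    rw [h x hx]
  cases Q
  · exact fun _ => hb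
  · exact fun _ => hb

theorem sat_linkEntry_ex_of_true {U : ℕ → Bool} {i p : ℕ} {X : Finset ℕ} {b : Fml}
    (hp : U p = true) : Sat U (D.linkEntry i (p, Quant.qex, X, b)) := by
  intro hnp
  exfalso
  exact hnp hp

theorem sat_linkEntry_all_of_false {U : ℕ → Bool} {i p : ℕ} {X : Finset ℕ} {b : Fml}
    (hp : U p = false) : Sat U (D.linkEntry i (p, Quant.qall, X, b)) := by
  intro hup
  exfalso
  simp only [Sat] at hup
  rw [hp] at hup
  cases hup

-- Freshness consequences
theorem key_not_mem_Nset {e : ℕ × Quant × Finset ℕ × Fml} (he : e ∈ D.L) : e.1 ∉ D.Nset := by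
  rw [D.mem_Nset]
  rintro ⟨i, e', hie, x, hx, hq⟩
  have := (D.hcfresh i e' hie x hx).2.2.2
  rw [hq] at this
  exact this (List.mem_map.mpr ⟨e, he, rfl⟩)

theorem mem_vars_not_Nset {q : ℕ} (hq : q ∈ vars φ) : q ∉ D.Nset := by
  rw [D.mem_Nset]
  rintro ⟨i, e', hie, x, hx, hqe⟩
  have := (D.hcfresh i e' hie x hx).2.1
  rw [hqe] at this
  exact this hq

theorem mem_vars_not_Pset {q : ℕ} (hq : q ∈ vars φ) : q ∉ D.Pset := by
  rw [D.mem_Pset]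
  rintro ⟨i, e', hie, (⟨x, hx, hqe⟩ | rfl)⟩
  · have := (D.hcfresh i e' hie x hx).1
    rw [hqe] at this
    exact this hq
  · exact D.hpnotin e' (List.mem_of_getElem? hie) hq

theorem negC_not_mem_Pset {i : ℕ} {e : ℕ × Quant × Finset ℕ × Fml}
    (he : D.L[i]? = some e) {x : ℕ} (hx : x ∈ e.2.2.1) : D.negC i x ∉ D.Pset := by
  rw [D.mem_Pset]
  rintro ⟨i', e', hie', (⟨x', hx', hqe⟩ | hqe)⟩
  · have := D.hcdist i i' e he e' hie' x hx x' hx' false true (by simp [hqe])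
    simp at this
  · have := (D.hcfresh i e he x hx).2.2.2
    exact this (List.mem_map.mpr ⟨e', List.mem_of_getElem? hie', hqe.symm⟩)

theorem key_not_posC {i : ℕ} {e : ℕ × Quant × Finset ℕ × Fml}
    (he : D.L[i]? = some e) {x : ℕ} (hx : x ∈ e.2.2.1)
    {e' : ℕ × Quant × Finset ℕ × Fml} (he' : e' ∈ D.L) : D.posC i x ≠ e'.1 := by
  intro hq
  have := (D.hcfresh i e he x hx).2.2.1
  rw [hq] at this
  exact this (List.mem_map.mpr ⟨e', he', rfl⟩)

end OneLevelData
end AuxLemmas4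
section AuxLemmas5
open Classical Fml

namespace Fml

theorem sat_entry_ex {V : ℕ → Bool} {p : ℕ} {X : Finset ℕ} {b : Fml} :
    Sat V (entryFml (p, Quant.qex, X, b)) ↔
      ∃ W : ℕ → Bool, (∀ q ∉ X, W q = V q) ∧ Sat W b := Iff.rfl

theorem sat_entry_all {V : ℕ → Bool} {p : ℕ} {X : Finset ℕ} {b : Fml} :
    Sat V (entryFml (p, Quant.qall, X, b)) ↔
      ∀ W : ℕ → Bool, (∀ q ∉ X, W q = V q) → Sat W b := Iff.rfl

/-- For any entry there is a valuation agreeing with `V` outside the block whose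
satisfaction of the body coincides with the truth of the quantified entry. -/
theorem exists_entry_witness (V : ℕ → Bool) (e : ℕ × Quant × Finset ℕ × Fml) :
    ∃ A : ℕ → Bool, (∀ q ∉ e.2.2.1, A q = V q) ∧ (Sat A e.2.2.2 ↔ Sat V (entryFml e)) := by
  classical
  rcases e with ⟨p, Q, X, b⟩
  cases Q
  · by_cases ht : Sat V (entryFml (p, Quant.qex, X, b))
    · obtain ⟨W, h1, h2⟩ := sat_entry_ex.mp ht
      exact ⟨W, h1, iff_of_true h2 ht⟩
    · refine ⟨V, fun _ _ => rfl, iff_of_false ?_ ht⟩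
      intro hb
      exact ht (sat_entry_ex.mpr ⟨V, fun _ _ => rfl, hb⟩)
  · by_cases ht : Sat V (entryFml (p, Quant.qall, X, b))
    · exact ⟨V, fun _ _ => rfl, iff_of_true (sat_entry_all.mp ht V (fun _ _ => rfl)) ht⟩
    · have : ∃ W : ℕ → Bool, (∀ q ∉ X, W q = V q) ∧ ¬ Sat W b := by
        by_contra hno
        push_neg at hno
        exact ht (sat_entry_all.mpr hno)
      obtain ⟨W, h1, h2⟩ := this
      exact ⟨W, h1, iff_of_false h2 ht⟩

end Fml

namespace OneLevelData

variable {φ : Fml} (D : OneLevelData φ)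

theorem sat_renameEntry' {V : ℕ → Bool} {i : ℕ} {e : ℕ × Quant × Finset ℕ × Fml}
    (he : D.L[i]? = some e) (hsub : vars (entryFml e) ⊆ vars φ) :
    Sat V (D.renameEntry i e) ↔
      Sat (fun q => if q ∈ e.2.2.1 then V (D.posC i q) else V q) e.2.2.2 := by
  rw [D.sat_renameEntry he hsub]
  apply sat_congr
  intro q hq
  by_cases hqx : q ∈ e.2.2.1
  · rw [if_pos (Finset.mem_toList.mpr hqx), if_pos hqx]
  · rw [if_neg (fun h => hqx (Finset.mem_toList.mp h)), if_neg hqx]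

/-- The condition selecting the entries whose positive copies get witness values. -/
def Mstat (V : ℕ → Bool) (e : ℕ × Quant × Finset ℕ × Fml) : Prop :=
  e.1 ∈ vars D.β ∧ ((e.2.1 = Quant.qex ∧ Sat V (entryFml e)) ∨
    (e.2.1 = Quant.qall ∧ ¬ Sat V (entryFml e)))

end OneLevelData
end AuxLemmas5

open Fml OneLevelData in
/-- for every QBF `φ` (with any one-level decomposition and
choice of fresh copies), `∃N(φ) ∀P(φ) T^∃(φ)` is logically equivalent
to `φ`. -/
theorem Tex_correct (φ : Fml) (D : OneLevelData φ) :
    Equiv (qex D.Nset (qall D.Pset D.Tex)) φ := by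
  classical
  intro V
  simp only [Sat]
  -- choose, for each entry, a valuation witnessing the truth value of the entry
  have hwitAll : ∀ i : ℕ, ∃ A : ℕ → Bool, ∀ e, D.L[i]? = some e →
      ((∀ q ∉ e.2.2.1, A q = V q) ∧ (Sat A e.2.2.2 ↔ Sat V (entryFml e))) := by
    intro i
    rcases hie : D.L[i]? with _ | e
    · exact ⟨V, fun e he => by cases he⟩
    · obtain ⟨A, h1, h2⟩ := exists_entry_witness V e
      refine ⟨A, fun e' he' => ?_⟩
      cases he'
      exact ⟨h1, h2⟩
  choose A hA using hwitAll
  constructor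
  · -- forward: from ∃N∀P(T^∃) conclude φ
    rintro ⟨W, hWN, hall⟩
    -- define the positive-copy values
    obtain ⟨c, hcpos, hcneg⟩ : ∃ c : ℕ → ℕ → Bool,
        (∀ i e, D.L[i]? = some e → D.Mstat V e → ∀ x, c i x = A i x) ∧
        (∀ i e, D.L[i]? = some e → ¬ D.Mstat V e → ∀ x, c i x = W (D.negC i x)) := by
      refine ⟨fun i x => if ∃ e, D.L[i]? = some e ∧ D.Mstat V e then A i x
        else W (D.negC i x), ?_, ?_⟩
      · intro i e hie hm x
        dsimp only
        rw [if_pos ⟨e, hie, hm⟩]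
      · intro i e hie hm x
        dsimp only
        rw [if_neg]
        rintro ⟨e', hie', hm'⟩
        rw [hie] at hie'
        cases hie'
        exact hm hm'
    obtain ⟨U₀, hU₀pos, hU₀neg⟩ : ∃ U₀ : ℕ → Bool,
        (∀ i e x, D.L[i]? = some e → x ∈ e.2.2.1 → U₀ (D.posC i x) = c i x) ∧
        (∀ q, (¬ ∃ i e x, D.L[i]? = some e ∧ x ∈ e.2.2.1 ∧ D.posC i x = q) → U₀ q = W q) := by
      refine ⟨fun q => if h : ∃ ix : ℕ × ℕ,
          (∃ e, D.L[ix.1]? = some e ∧ ix.2 ∈ e.2.2.1) ∧ D.posC ix.1 ix.2 = q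
        then c h.choose.1 h.choose.2 else W q, ?_, ?_⟩
      · intro i e x hie hx
        have hex : ∃ ix : ℕ × ℕ,
            (∃ e, D.L[ix.1]? = some e ∧ ix.2 ∈ e.2.2.1) ∧ D.posC ix.1 ix.2 = D.posC i x :=
          ⟨(i, x), ⟨e, hie, hx⟩, rfl⟩
        dsimp only
        rw [dif_pos hex]
        obtain ⟨⟨e', hie', hx'⟩, heq⟩ := hex.choose_spec
        have := D.hcdist hex.choose.1 i e' hie' e hie hex.choose.2 hx' x hx true true
          (by simpa using heq)
        simp only [Prod.mk.injEq] at this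
        rw [this.1, this.2.1]
      · intro q hq
        dsimp only
        rw [dif_neg]
        rintro ⟨⟨i, x⟩, ⟨e, hie, hx⟩, heq⟩
        exact hq ⟨i, e, x, hie, hx, heq⟩
    obtain ⟨U, hUkey, hUnk⟩ : ∃ U : ℕ → Bool,
        (∀ i e, D.L[i]? = some e → U e.1 = bSat U₀ (D.renameEntry i e)) ∧
        (∀ q, (¬ ∃ e ∈ D.L, e.1 = q) → U q = U₀ q) := by
      refine ⟨fun q => if h : ∃ ie : ℕ × (ℕ × Quant × Finset ℕ × Fml),
          D.L[ie.1]? = some ie.2 ∧ ie.2.1 = q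
        then bSat U₀ (D.renameEntry h.choose.1 h.choose.2) else U₀ q, ?_, ?_⟩
      · intro i e hie
        have hex : ∃ ie : ℕ × (ℕ × Quant × Finset ℕ × Fml),
            D.L[ie.1]? = some ie.2 ∧ ie.2.1 = e.1 := ⟨(i, e), hie, rfl⟩
        dsimp only
        rw [dif_pos hex]
        obtain ⟨hie', hkeq⟩ := hex.choose_spec
        have heeq : hex.choose.2 = e :=
          List.inj_on_of_nodup_map D.hnodup (List.mem_of_getElem? hie') (List.mem_of_getElem? hie) hkeq
        have hieq : hex.choose.1 = i := by
          have h1 : (D.L.map (fun e => e.1))[hex.choose.1]? = some e.1 := by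
            rw [List.getElem?_map, hie', heeq]
            rfl
          have h2 : (D.L.map (fun e => e.1))[i]? = some e.1 := by
            rw [List.getElem?_map, hie]
            rfl
          have hlen : hex.choose.1 < (D.L.map (fun e => e.1)).length := by
            by_contra hlt
            rw [List.getElem?_eq_none_iff.mpr (le_of_not_gt hlt)] at h1
            cases h1
          exact (List.getElem?_inj hlen D.hnodup).mp (h1.trans h2.symm)
        rw [hieq, heeq]
      · intro q hq
        dsimp only
        rw [dif_neg]
        rintro ⟨⟨i, e⟩, hie, hkeq⟩
        exact hq ⟨e, List.mem_of_getElem? hie, hkeq⟩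
    -- U agrees with W outside P
    have hUP : ∀ q ∉ D.Pset, U q = W q := by
      intro q hq
      have h1 : ¬ ∃ e ∈ D.L, e.1 = q := by
        rintro ⟨e, heL, rfl⟩
        obtain ⟨i, hie⟩ := List.mem_iff_getElem?.mp heL
        exact hq (D.mem_Pset.mpr ⟨i, e, hie, Or.inr rfl⟩)
      have h2 : ¬ ∃ i e x, D.L[i]? = some e ∧ x ∈ e.2.2.1 ∧ D.posC i x = q := by
        rintro ⟨i, e, x, hie, hx, rfl⟩
        exact hq (D.mem_Pset.mpr ⟨i, e, hie, Or.inl ⟨x, hx, rfl⟩⟩)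
      rw [hUnk q h1, hU₀neg q h2]
    have hTex : Sat U D.Tex := hall U hUP
    have hTex' : Sat U D.constraints → Sat U D.β := by
      simpa only [OneLevelData.Tex, Sat] using hTex
    -- U₀ agrees with V on vars φ
    have hU₀V : ∀ q ∈ vars φ, U₀ q = V q := by
      intro q hq
      rw [hU₀neg q (by
        rintro ⟨i', e', x', hie', hx', rfl⟩
        exact (D.hcfresh i' e' hie' x' hx').1 hq)]
      exact hWN q (D.mem_vars_not_Nset hq)
    -- evaluating the renamed bodies of used entries under U₀
    have heval : ∀ i e, D.L[i]? = some e → e.1 ∈ vars D.β →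
        (Sat U₀ (D.renameEntry i e) ↔ Sat V (entryFml e)) := by
      intro i e hie hu
      have hmem : e ∈ D.L := List.mem_of_getElem? hie
      have hvent := D.vars_entry_subset hmem hu
      rw [D.sat_renameEntry' hie hvent]
      obtain ⟨hAagree, hAiff⟩ := hA i e hie
      have hbsub : ∀ q ∈ freeVars e.2.2.2, q ∉ e.2.2.1 → q ∈ vars φ := by
        intro q hq _
        apply hvent
        rw [vars_entry_eq]
        exact Finset.mem_union_right _ (freeVars_subset_vars _ hq)
      by_cases hm : D.Mstat V e
      · have hcong : Sat (fun q => if q ∈ e.2.2.1 then U₀ (D.posC i q) else U₀ q) e.2.2.2 ↔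
            Sat (A i) e.2.2.2 := by
          apply sat_congr
          intro q hq
          by_cases hqx : q ∈ e.2.2.1
          · rw [if_pos hqx, hU₀pos i e q hie hqx, hcpos i e hie hm q]
          · rw [if_neg hqx, hU₀V q (hbsub q hq hqx), ← hAagree q hqx]
        rw [hcong, hAiff]
      · have hcong : Sat (fun q => if q ∈ e.2.2.1 then U₀ (D.posC i q) else U₀ q) e.2.2.2 ↔
            Sat (fun q => if q ∈ e.2.2.1 then W (D.negC i q) else V q) e.2.2.2 := by
          apply sat_congr
          intro q hq
          by_cases hqx : q ∈ e.2.2.1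
          · rw [if_pos hqx, if_pos hqx, hU₀pos i e q hie hqx, hcneg i e hie hm q]
          · rw [if_neg hqx, if_neg hqx, hU₀V q (hbsub q hq hqx)]
        rw [hcong]
        have hagr : ∀ q ∉ e.2.2.1,
            (fun q => if q ∈ e.2.2.1 then W (D.negC i q) else V q) q = V q := by
          intro q hq
          simp only [if_neg hq]
        rcases e with ⟨p, Q, X, b⟩
        cases Q
        · have hnt : ¬ Sat V (entryFml (p, Quant.qex, X, b)) := by
            intro ht
            exact hm ⟨hu, Or.inl ⟨rfl, ht⟩⟩
          exact iff_of_false (fun hs => hnt (sat_entry_ex.mpr ⟨_, hagr, hs⟩)) hnt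
        · have ht : Sat V (entryFml (p, Quant.qall, X, b)) := by
            by_contra hnt
            exact hm ⟨hu, Or.inr ⟨rfl, hnt⟩⟩
          exact iff_of_true (sat_entry_all.mp ht _ hagr) ht
    -- U satisfies the constraints
    have hC : Sat U D.constraints := by
      rw [D.sat_constraints_iff]
      intro i e hie
      constructor
      · -- defining constraint
        have hcongU : Sat U (D.renameEntry i e) ↔ Sat U₀ (D.renameEntry i e) := by
          apply sat_congr
          intro q hq
          apply hUnk
          rintro ⟨e', he'L, rfl⟩
          simp only [OneLevelData.renameEntry] at hq
          rcases mem_freeVars_simSubst hq with hq' | ⟨z, hz, hq'⟩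
          · exact D.hpnotfree e' he'L e (List.mem_of_getElem? hie) hq'
          · obtain ⟨x, hx, rfl⟩ := List.mem_map.mp hz
            rw [Finset.mem_toList] at hx
            simp only [freeVars, Finset.mem_singleton] at hq'
            exact D.key_not_posC hie hx he'L hq'.symm
        rw [hUkey i e hie, bSat_iff, hcongU]
      · -- linking constraint
        have hposU : ∀ x ∈ e.2.2.1, U (D.posC i x) = U₀ (D.posC i x) := by
          intro x hx
          apply hUnk
          rintro ⟨e', he'L, heq⟩
          exact D.key_not_posC hie hx he'L heq.symm
        have hnegU : ∀ x ∈ e.2.2.1, U (D.negC i x) = W (D.negC i x) := by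
          intro x hx
          rw [hUnk _ (by
            rintro ⟨e', he'L, heq⟩
            have := (D.hcfresh i e hie x hx).2.2.2
            exact this (List.mem_map.mpr ⟨e', he'L, heq⟩))]
          apply hU₀neg
          rintro ⟨i', e', x', hie', hx', heq⟩
          have := D.hcdist i' i e' hie' e hie x' hx' x hx true false (by simpa using heq)
          simp at this
        by_cases hm : D.Mstat V e
        · have hu : e.1 ∈ vars D.β := hm.1
          have hup : U e.1 = true ↔ Sat V (entryFml e) := by
            rw [hUkey i e hie, bSat_iff]
            exact heval i e hie hu
          rcases e with ⟨p, Q, X, b⟩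
          rcases hm.2 with ⟨hQ, ht⟩ | ⟨hQ, ht⟩
          · simp only at hQ
            subst hQ
            exact D.sat_linkEntry_ex_of_true (hup.mpr ht)
          · simp only at hQ
            subst hQ
            have hf : U p = false := by
              rcases hU : U p with _ | _
              · rfl
              · exact absurd (hup.mp hU) ht
            exact D.sat_linkEntry_all_of_false hf
        · have hagree : ∀ x ∈ e.2.2.1, U (D.posC i x) = U (D.negC i x) := by
            intro x hx
            rw [hposU x hx, hU₀pos i e x hie hx, hcneg i e hie hm x, hnegU x hx]
          rcases e with ⟨p, Q, X, b⟩
          exact D.sat_linkEntry_of_agree hagree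
    have hβ : Sat U D.β := hTex' hC
    rw [D.sat_iff_Vstar V]
    have hfinal : Sat (D.Vstar V) D.β ↔ Sat U D.β := by
      apply sat_congr
      intro q hq
      have hqv : q ∈ vars D.β := freeVars_subset_vars _ hq
      by_cases hk : ∃ e ∈ D.L, e.1 = q
      · obtain ⟨e, heL, rfl⟩ := hk
        obtain ⟨i, hie⟩ := List.mem_iff_getElem?.mp heL
        rw [D.vstar_of_key heL, hUkey i e hie]
        rw [Bool.eq_iff_iff, bSat_iff, bSat_iff]
        exact (heval i e hie hqv).symm
      · have hnk : q ∉ D.L.map (fun e => e.1) := by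
          intro hmem
          obtain ⟨e, heL, hq'⟩ := List.mem_map.mp hmem
          exact hk ⟨e, heL, hq'⟩
        have hqφ := D.mem_vars_of_not_key hqv hnk
        rw [D.vstar_of_not_key hnk, hUnk q (by
          rintro ⟨e, heL, rfl⟩
          exact hnk (List.mem_map.mpr ⟨e, heL, rfl⟩)), hU₀V q hqφ]
    exact hfinal.mpr hβ
  · -- backward: from φ construct the witness for the negative copies
    intro hφ
    obtain ⟨W, hW1, hW2⟩ : ∃ W : ℕ → Bool,
        (∀ i e x, D.L[i]? = some e → x ∈ e.2.2.1 → W (D.negC i x) = A i x) ∧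
        (∀ q, (¬ ∃ i e x, D.L[i]? = some e ∧ x ∈ e.2.2.1 ∧ D.negC i x = q) → W q = V q) := by
      refine ⟨fun q => if h : ∃ ix : ℕ × ℕ,
          (∃ e, D.L[ix.1]? = some e ∧ ix.2 ∈ e.2.2.1) ∧ D.negC ix.1 ix.2 = q
        then A h.choose.1 h.choose.2 else V q, ?_, ?_⟩
      · intro i e x hie hx
        have hex : ∃ ix : ℕ × ℕ,
            (∃ e, D.L[ix.1]? = some e ∧ ix.2 ∈ e.2.2.1) ∧ D.negC ix.1 ix.2 = D.negC i x :=
          ⟨(i, x), ⟨e, hie, hx⟩, rfl⟩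
        dsimp only
        rw [dif_pos hex]
        obtain ⟨⟨e', hie', hx'⟩, heq⟩ := hex.choose_spec
        have := D.hcdist hex.choose.1 i e' hie' e hie hex.choose.2 hx' x hx false false
          (by simpa using heq)
        simp only [Prod.mk.injEq] at this
        rw [this.1, this.2.1]
      · intro q hq
        dsimp only
        rw [dif_neg]
        rintro ⟨⟨i, x⟩, ⟨e, hie, hx⟩, heq⟩
        exact hq ⟨i, e, x, hie, hx, heq⟩
    refine ⟨W, ?_, ?_⟩
    · intro q hq
      apply hW2
      rintro ⟨i, e, x, hie, hx, rfl⟩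
      exact hq (D.mem_Nset.mpr ⟨i, e, hie, x, hx, rfl⟩)
    · intro U hU
      have hTexU : Sat U D.constraints → Sat U D.β := by
        intro hC
        -- facts about U
        have hUV : ∀ q ∈ vars φ, U q = V q := by
          intro q hq
          rw [hU q (D.mem_vars_not_Pset hq)]
          apply hW2
          rintro ⟨i, e, x, hie, hx, rfl⟩
          exact (D.hcfresh i e hie x hx).2.1 hq
        have hUneg : ∀ i e x, D.L[i]? = some e → x ∈ e.2.2.1 →
            U (D.negC i x) = A i x := by
          intro i e x hie hx
          rw [hU _ (D.negC_not_mem_Pset hie hx), hW1 i e x hie hx]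
        have hsatC := D.sat_constraints_iff.mp hC
        have hforce : ∀ (i : ℕ) e, D.L[i]? = some e → e.1 ∈ vars D.β →
            (U e.1 = true ↔ Sat V (entryFml e)) := by
          intro i e hie hu
          have hmem : e ∈ D.L := List.mem_of_getElem? hie
          have hvent := D.vars_entry_subset hmem hu
          obtain ⟨hdef, hlink⟩ := hsatC i e hie
          rw [D.sat_renameEntry' hie hvent] at hdef
          obtain ⟨hAagree, hAiff⟩ := hA i e hie
          have hbsub : ∀ q ∈ freeVars e.2.2.2, q ∉ e.2.2.1 → q ∈ vars φ := by
            intro q hq _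
            apply hvent
            rw [vars_entry_eq]
            exact Finset.mem_union_right _ (freeVars_subset_vars _ hq)
          have hcong1 : Sat (fun q => if q ∈ e.2.2.1 then U (D.posC i q) else U q) e.2.2.2 ↔
              Sat (fun q => if q ∈ e.2.2.1 then U (D.posC i q) else V q) e.2.2.2 := by
            apply sat_congr
            intro q hq
            by_cases hqx : q ∈ e.2.2.1
            · rw [if_pos hqx, if_pos hqx]
            · rw [if_neg hqx, if_neg hqx]
              exact hUV q (hbsub q hq hqx)
          have hVXagree : ∀ q ∉ e.2.2.1,
              (fun q => if q ∈ e.2.2.1 then U (D.posC i q) else V q) q = V q := by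
            intro q hq
            simp only [if_neg hq]
          have hcong2 : (∀ x ∈ e.2.2.1, U (D.posC i x) = U (D.negC i x)) →
              (Sat (fun q => if q ∈ e.2.2.1 then U (D.posC i q) else U q) e.2.2.2 ↔
                Sat (A i) e.2.2.2) := by
            intro hlk
            apply sat_congr
            intro q hq
            by_cases hqx : q ∈ e.2.2.1
            · rw [if_pos hqx, hlk q hqx, hUneg i e q hie hqx]
            · rw [if_neg hqx, hUV q (hbsub q hq hqx), ← hAagree q hqx]
          rcases e with ⟨p, Q, X, b⟩
          cases Q
          · constructor
            · intro hp
              have := hcong1.mp (hdef.mp hp)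
              exact sat_entry_ex.mpr ⟨_, hVXagree, this⟩
            · intro ht
              by_contra hp
              have hp' : U p = false := by
                rcases hUp : U p with _ | _
                · rfl
                · exact absurd hUp hp
              have hlk := D.sat_linkEntry_ex hlink hp'
              exact hp (hdef.mpr ((hcong2 hlk).mpr (hAiff.mpr ht)))
          · constructor
            · intro hp
              have hlk := D.sat_linkEntry_all hlink hp
              exact hAiff.mp ((hcong2 hlk).mp (hdef.mp hp))
            · intro ht
              have := sat_entry_all.mp ht _ hVXagree
              exact hdef.mpr (hcong1.mpr this)
        have hfinal : Sat U D.β ↔ Sat (D.Vstar V) D.β := by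
          apply sat_congr
          intro q hq
          have hqv : q ∈ vars D.β := freeVars_subset_vars _ hq
          by_cases hk : ∃ e ∈ D.L, e.1 = q
          · obtain ⟨e, heL, rfl⟩ := hk
            obtain ⟨i, hie⟩ := List.mem_iff_getElem?.mp heL
            rw [D.vstar_of_key heL]
            rw [Bool.eq_iff_iff, bSat_iff]
            exact hforce i e hie hqv
          · have hnk : q ∉ D.L.map (fun e => e.1) := by
              intro hmem
              obtain ⟨e, heL, hq'⟩ := List.mem_map.mp hmem
              exact hk ⟨e, heL, hq'⟩
            rw [D.vstar_of_not_key hnk]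
            exact hUV q (D.mem_vars_of_not_key hqv hnk)
        exact hfinal.mpr ((D.sat_iff_Vstar V).mp hφ)
      simpa only [OneLevelData.Tex, Sat] using hTexU
end

section
/- Depth reduction of the one-level transformation: for every QBF φ and Q ∈ {∃,∀}, if φ is boolean then md(T^Q(φ)) = 0, and otherwise md(T^Q(φ)) = md(φ) − 1. -/
namespace Fml

lemma md_eq_zero_of_isBool : ∀ {φ : Fml}, isBool φ = true → md φ = 0 := by
  intro φ h
  induction φ <;> simp_all [isBool, md]

lemma simSubst_nil : ∀ ψ : Fml, simSubst [] ψ = ψ := by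
  intro ψ
  induction ψ <;> simp_all [simSubst]

lemma md_simSubst : ∀ (ψ : Fml) (σ : List (ℕ × Fml)), (∀ e ∈ σ, md e.2 = 0) →
    md (simSubst σ ψ) = md ψ := by
  intro ψ
  induction ψ with
  | var q =>
    intro σ h
    simp only [simSubst, md]
    cases hf : σ.find? (fun e => e.1 == q) with
    | none => rfl
    | some e =>
      have := List.mem_of_find?_eq_some hf
      simpa using h e this
  | tru => intro σ h; simp [simSubst, md]
  | fls => intro σ h; simp [simSubst, md]
  | neg φ ih => intro σ h; simp [simSubst, md, ih σ h]
  | conj φ ψ ih1 ih2 => intro σ h; simp [simSubst, md, ih1 σ h, ih2 σ h]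
  | disj φ ψ ih1 ih2 => intro σ h; simp [simSubst, md, ih1 σ h, ih2 σ h]
  | imp φ ψ ih1 ih2 => intro σ h; simp [simSubst, md, ih1 σ h, ih2 σ h]
  | biff φ ψ ih1 ih2 => intro σ h; simp [simSubst, md, ih1 σ h, ih2 σ h]
  | qex X φ ih =>
    intro σ h
    simp only [simSubst, md]
    rw [ih _ (fun e he => h e (List.mem_of_mem_filter he))]
  | qall X φ ih =>
    intro σ h
    simp only [simSubst, md]
    rw [ih _ (fun e he => h e (List.mem_of_mem_filter he))]

lemma md_bigAnd : ∀ l : List Fml, md (bigAnd l) = (l.map md).foldr max 0 := by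
  intro l
  induction l with
  | nil => simp [bigAnd, md]
  | cons a t ih =>
    cases t with
    | nil => simp [bigAnd, md]
    | cons b t' => simp only [bigAnd, md, ih, List.map_cons, List.foldr_cons]

lemma foldr_max_map_succ {α : Type*} (f : α → ℕ) :
    ∀ l : List α, l ≠ [] →
    (l.map (fun x => 1 + f x)).foldr max 0 = 1 + (l.map f).foldr max 0 := by
  intro l
  induction l with
  | nil => simp
  | cons a t ih =>
    intro _
    cases t with
    | nil => simp
    | cons b t' =>
      simp only [List.map_cons, List.foldr_cons] at ih ⊢
      rw [ih (by simp)]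
      omega

end Fml

namespace OneLevelData

open Fml

lemma md_renameEntry {φ : Fml} (D : OneLevelData φ) (i : ℕ) (e : ℕ × Quant × Finset ℕ × Fml) :
    md (D.renameEntry i e) = md e.2.2.2 := by
  apply md_simSubst
  intro p hp
  simp only [List.mem_map] at hp
  obtain ⟨x, _, rfl⟩ := hp
  rfl

lemma md_linkEntry {φ : Fml} (D : OneLevelData φ) (i : ℕ) (e : ℕ × Quant × Finset ℕ × Fml) :
    md (D.linkEntry i e) = 0 := by
  unfold linkEntry
  cases e.2.1 <;>
  · simp only [md, md_bigAnd, List.map_map, Nat.max_eq_zero_iff]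
    refine ⟨trivial, ?_⟩
    induction e.2.2.1.toList with
    | nil => rfl
    | cons a t ih => simpa [Function.comp, md] using ih

lemma md_constraints {φ : Fml} (D : OneLevelData φ) :
    md D.constraints = (D.L.map (fun e => md e.2.2.2)).foldr max 0 := by
  unfold constraints
  simp only [md, md_bigAnd, List.map_map]
  have h1 : ((D.L.zipIdx.map Prod.swap).map (md ∘ fun ie => biff (var ie.2.1) (D.renameEntry ie.1 ie.2)))
      = (D.L.zipIdx.map Prod.swap).map ((fun e => md e.2.2.2) ∘ Prod.snd) := by
    apply List.map_congr_left
    intro ie _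
    simp only [Function.comp, md, md_renameEntry]
    omega
  have h2 : ((D.L.zipIdx.map Prod.swap).map (md ∘ fun ie => D.linkEntry ie.1 ie.2))
      = (D.L.zipIdx.map Prod.swap).map (fun _ => 0) := by
    apply List.map_congr_left
    intro ie _
    simp [Function.comp, md_linkEntry]
  rw [← Function.comp_assoc, ← Function.comp_assoc, ← List.map_map (f := Prod.swap),
    ← List.map_map (f := Prod.swap)]
  rw [h1, h2]
  have h3 : (D.L.zipIdx.map Prod.swap).map ((fun e => md e.2.2.2) ∘ Prod.snd)
      = D.L.map (fun e => md e.2.2.2) := by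
    rw [← List.map_map, List.map_map (g := Prod.snd) (f := Prod.swap)]
    exact congrArg (List.map _) (List.zipIdx_map_fst 0 D.L)
  rw [h3]
  have h4 : ∀ n : ℕ, ((D.L.zipIdx.map Prod.swap).map (fun _ => (0:ℕ))).foldr max 0 = 0 := by
    intro _
    induction (D.L.zipIdx.map Prod.swap) with
    | nil => rfl
    | cons a t ih => simp_all
  rw [h4 0]
  omega

end OneLevelData

open Fml OneLevelData in
/-- depth reduction of the one-level transformation: for every
QBF `φ` and `Q ∈ {∃,∀}`, if `φ` is boolean then `md (T^Q(φ)) = 0`, and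
otherwise `md (T^Q(φ)) = md φ − 1`. -/
theorem T_depth (φ : Fml) (D : OneLevelData φ) (Q : Quant) :
    (φ.isBool = true → md (D.TQ Q) = 0) ∧
    (φ.isBool = false → md (D.TQ Q) = md φ - 1) := by
  have hβ : md D.β = 0 := md_eq_zero_of_isBool D.hbool
  have hTQ : md (D.TQ Q) = max (md D.constraints) (md D.β) := by
    cases Q <;> rfl
  constructor
  · intro hb
    have hmdφ : md φ = 0 := md_eq_zero_of_isBool hb
    have hLnil : D.L = [] := by
      cases hL : D.L with
      | nil => rfl
      | cons e t =>
        exfalso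
        have := D.hmd
        rw [hL, hmdφ] at this
        simp only [List.map_cons, List.foldr_cons] at this
        omega
    rw [hTQ, D.md_constraints, hLnil, hβ]
    rfl
  · intro hb
    have hLne : D.L ≠ [] := by
      intro hL
      have := D.hdec
      rw [hL] at this
      simp only [List.map_nil, simSubst_nil] at this
      rw [this, D.hbool] at hb
      exact Bool.true_eq_false.mp hb
    rw [hTQ, D.md_constraints, hβ, D.hmd,
      foldr_max_map_succ (fun e => md e.2.2.2) D.L hLne]
    omega
end
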